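/- arXiv:0708.3901 — 2 statements merged into one kernel-verified Lean document; each statement's English description precedes it below -/
import Mathlib

section
/- Let f, f' : Y → X be close coarse maps between coarse spaces. Then the ideals of 𝓔_X generated by the push-forwards agree: ⟪{(f × f)(F) : F ∈ 𝓔_Y}⟫_X = ⟪{(f' × f')(F) : F ∈ 𝓔_Y}⟫_X, where ⟪𝓔'⟫_X denotes the smallest ideal of 𝓔_X containing 𝓔'. -/
open Set

universe u v w

/-- `E ⊆ X × X` satisfies the properness axiom: for every finite `K ⊆ X`,
the sets `{e ∈ E | e.1 ∈ K}` and `{e ∈ E | e.2 ∈ K}` are finite. -/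
def ProperAx {X : Type u} (E : Set (X × X)) : Prop :=
  ∀ K : Set X, K.Finite → {e ∈ E | e.1 ∈ K}.Finite ∧ {e ∈ E | e.2 ∈ K}.Finite

/-- Composition of relations: `E ∘ E' = {(x, x'') : ∃ x', (x, x') ∈ E ∧ (x', x'') ∈ E'}`. -/
def rcomp {X : Type u} (E E' : Set (X × X)) : Set (X × X) :=
  {p | ∃ x', (p.1, x') ∈ E ∧ (x', p.2) ∈ E'}

/-- Transpose of a relation. -/
def rtrans {X : Type u} (E : Set (X × X)) : Set (X × X) :=
  {p | (p.2, p.1) ∈ E}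

/-- Local unit over `S`: the diagonal `{(x, x) : x ∈ S}`. -/
def runit {X : Type u} (S : Set X) : Set (X × X) :=
  {p | p.1 ∈ S ∧ p.1 = p.2}

/-- A set map is proper if the preimage of every finite subset is finite. -/
def ProperMap {Y : Type u} {X : Type v} (f : Y → X) : Prop :=
  ∀ K : Set X, K.Finite → (f ⁻¹' K).Finite

/-- `f` is locally proper for `F ⊆ Y × Y`: `(f × f)(F)` satisfies the properness
axiom and the restriction of `f × f` to `F` is a proper map into `X × X`. -/
def LocProperFor {Y : Type u} {X : Type v} (f : Y → X) (F : Set (Y × Y)) : Prop :=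
  ProperAx (Prod.map f f '' F) ∧
  ∀ K : Set (X × X), K.Finite → {p ∈ F | Prod.map f f p ∈ K}.Finite

/-- A coarse structure on `X`. -/
structure CoarseStructure (X : Type u) where
  ents : Set (Set (X × X))
  proper : ∀ E ∈ ents, ProperAx E
  union_mem : ∀ E ∈ ents, ∀ E' ∈ ents, E ∪ E' ∈ ents
  comp_mem : ∀ E ∈ ents, ∀ E' ∈ ents, rcomp E E' ∈ ents
  trans_mem : ∀ E ∈ ents, rtrans E ∈ ents
  subset_mem : ∀ E ∈ ents, ∀ E' ⊆ E, E' ∈ ents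
  singleton_mem : ∀ x : X, ({(x, x)} : Set (X × X)) ∈ ents

/-- A coarse map: locally proper for every entourage of the domain, and
preserves entourages. -/
def IsCoarseMap {Y : Type u} {X : Type v} (CY : CoarseStructure Y) (CX : CoarseStructure X)
    (f : Y → X) : Prop :=
  ∀ F ∈ CY.ents, LocProperFor f F ∧ Prod.map f f '' F ∈ CX.ents

/-- `(f × f')(F) = {(f y, f' y') : (y, y') ∈ F}`. -/
def prodImage {Y : Type u} {X : Type v} (f f' : Y → X) (F : Set (Y × Y)) : Set (X × X) :=
  (fun p => (f p.1, f' p.2)) '' F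

/-- Coarse maps `f, f'` are close if `(f × f')(F)` is an entourage of the codomain
for every entourage `F` of the domain. -/
def Close {Y : Type u} {X : Type v} (CY : CoarseStructure Y) (CX : CoarseStructure X)
    (f f' : Y → X) : Prop :=
  ∀ F ∈ CY.ents, prodImage f f' F ∈ CX.ents

/-- Left support `F·Y`. -/
def leftSupp {Y : Type u} (F : Set (Y × Y)) : Set Y := Prod.fst '' F

/-- Right support `Y·F`. -/
def rightSupp {Y : Type u} (F : Set (Y × Y)) : Set Y := Prod.snd '' F

/-- Left `F`-neighbourhood `F·S`. -/
def leftNbhd {Y : Type u} (F : Set (Y × Y)) (S : Set Y) : Set Y := {y | ∃ y' ∈ S, (y, y') ∈ F}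

/-- Right `F`-neighbourhood `S·F`. -/
def rightNbhd {Y : Type u} (S : Set Y) (F : Set (Y × Y)) : Set Y := {y' | ∃ y ∈ S, (y, y') ∈ F}

/-- A collection of subsets of `X × X` is a coarse structure. -/
def IsCoarseStructureSet {X : Type u} (E : Set (Set (X × X))) : Prop :=
  (∀ F ∈ E, ProperAx F) ∧ (∀ F ∈ E, ∀ F' ∈ E, F ∪ F' ∈ E) ∧
  (∀ F ∈ E, ∀ F' ∈ E, rcomp F F' ∈ E) ∧ (∀ F ∈ E, rtrans F ∈ E) ∧
  (∀ F ∈ E, ∀ F' ⊆ F, F' ∈ E) ∧ (∀ x : X, ({(x, x)} : Set (X × X)) ∈ E)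

/-- An ideal of a coarse structure. -/
def IsIdeal {X : Type u} (CX : CoarseStructure X) (I : Set (Set (X × X))) : Prop :=
  I ⊆ CX.ents ∧ IsCoarseStructureSet I ∧
  ∀ F ∈ I, ∀ F' ∈ CX.ents, rcomp F F' ∈ I ∧ rcomp F' F ∈ I

/-- The smallest ideal of `CX` containing `S`. -/
def idealGen {X : Type u} (CX : CoarseStructure X) (S : Set (Set (X × X))) :
    Set (Set (X × X)) :=
  ⋂₀ {I | IsIdeal CX I ∧ S ⊆ I}

/-! `(f × f)(F) ⊆ (f × f')(Δ) ∘ (f' × f')(F) ∘ (f' × f)(Δ')`, where `Δ` and `Δ'` are the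
diagonals over the left and right supports of `F`. They are entourages, as `Δ ⊆ F ∘ Fᵀ` and
`Δ' ⊆ Fᵀ ∘ F`, so closeness makes the outer factors entourages of `X`. Hence every ideal containing
the push-forwards along `f'` contains those along `f`, and closeness is symmetric. -/

lemma rtrans_prodImage_rtrans {Y : Type u} {X : Type v} (f f' : Y → X) (F : Set (Y × Y)) :
    rtrans (prodImage f f' (rtrans F)) = prodImage f' f F := by
  ext ⟨a, b⟩
  simp only [rtrans, prodImage, mem_image, mem_ofPred_eq, Prod.exists, Prod.mk.injEq]
  exact ⟨fun ⟨y, y', h, ha, hb⟩ => ⟨y', y, h, hb, ha⟩, fun ⟨y, y', h, ha, hb⟩ => ⟨y', y, h, hb, ha⟩⟩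

lemma Close.symm {Y : Type u} {X : Type v} {CY : CoarseStructure Y} {CX : CoarseStructure X}
    {f f' : Y → X} (hclose : Close CY CX f f') : Close CY CX f' f := fun F hF => by
  rw [← rtrans_prodImage_rtrans]
  exact CX.trans_mem _ (hclose _ (CY.trans_mem F hF))

lemma runit_leftSupp_subset {Y : Type u} (F : Set (Y × Y)) :
    runit (leftSupp F) ⊆ rcomp F (rtrans F) := by
  rintro ⟨_, _⟩ ⟨⟨⟨y, y'⟩, hy, rfl⟩, h⟩
  cases h
  exact ⟨y', hy, hy⟩

lemma runit_rightSupp_subset {Y : Type u} (F : Set (Y × Y)) :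
    runit (rightSupp F) ⊆ rcomp (rtrans F) F := by
  rintro ⟨_, _⟩ ⟨⟨⟨y, y'⟩, hy, rfl⟩, h⟩
  cases h
  exact ⟨y, hy, hy⟩

namespace CoarseStructure

variable {Y : Type u} (CY : CoarseStructure Y) {F : Set (Y × Y)}

lemma runit_leftSupp_mem (hF : F ∈ CY.ents) : runit (leftSupp F) ∈ CY.ents :=
  CY.subset_mem _ (CY.comp_mem F hF _ (CY.trans_mem F hF)) _ (runit_leftSupp_subset F)

lemma runit_rightSupp_mem (hF : F ∈ CY.ents) : runit (rightSupp F) ∈ CY.ents :=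
  CY.subset_mem _ (CY.comp_mem _ (CY.trans_mem F hF) F hF) _ (runit_rightSupp_subset F)

end CoarseStructure

lemma image_map_subset_rcomp {Y : Type u} {X : Type v} (f f' : Y → X) (F : Set (Y × Y)) :
    Prod.map f f '' F ⊆
      rcomp (rcomp (prodImage f f' (runit (leftSupp F))) (Prod.map f' f' '' F))
        (prodImage f' f (runit (rightSupp F))) := by
  rintro _ ⟨⟨y, y'⟩, hy, rfl⟩
  refine ⟨f' y', ⟨f' y, ?_, ⟨(y, y'), hy, rfl⟩⟩, ?_⟩
  · exact ⟨(y, y), ⟨⟨(y, y'), hy, rfl⟩, rfl⟩, rfl⟩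
  · exact ⟨(y', y'), ⟨⟨(y, y'), hy, rfl⟩, rfl⟩, rfl⟩

namespace IsIdeal

variable {X : Type u} {CX : CoarseStructure X} {I : Set (Set (X × X))} (hI : IsIdeal CX I)
include hI

lemma rcomp_rcomp_mem {E A B : Set (X × X)} (hE : E ∈ I) (hA : A ∈ CX.ents)
    (hB : B ∈ CX.ents) : rcomp (rcomp A E) B ∈ I :=
  (hI.2.2 _ (hI.2.2 E hE A hA).2 B hB).1

lemma mem_of_subset {E E' : Set (X × X)} (hE : E ∈ I) (h : E' ⊆ E) : E' ∈ I :=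
  hI.2.1.2.2.2.2.1 E hE E' h

lemma image_map_mem_of_close {Y : Type w} {CY : CoarseStructure Y} {f f' : Y → X}
    (hclose : Close CY CX f f') (hpush : ∀ F ∈ CY.ents, Prod.map f' f' '' F ∈ I)
    {F : Set (Y × Y)} (hF : F ∈ CY.ents) : Prod.map f f '' F ∈ I :=
  hI.mem_of_subset
    (hI.rcomp_rcomp_mem (hpush F hF) (hclose _ (CY.runit_leftSupp_mem hF))
      (hclose.symm _ (CY.runit_rightSupp_mem hF)))
    (image_map_subset_rcomp f f' F)

end IsIdeal

lemma idealGen_subset_idealGen {X : Type u} {CX : CoarseStructure X}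
    {S T : Set (Set (X × X))} (h : ∀ I, IsIdeal CX I → T ⊆ I → S ⊆ I) :
    idealGen CX S ⊆ idealGen CX T :=
  fun _ hE I hI => hE I ⟨hI.1, h I hI.1 hI.2⟩

lemma idealGen_image_map_subset_of_close {Y : Type u} {X : Type v} {CY : CoarseStructure Y}
    {CX : CoarseStructure X} {f f' : Y → X} (hclose : Close CY CX f f') :
    idealGen CX {E | ∃ F ∈ CY.ents, E = Prod.map f f '' F} ⊆
      idealGen CX {E | ∃ F ∈ CY.ents, E = Prod.map f' f' '' F} :=
  idealGen_subset_idealGen fun _ hI hT => by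
    rintro _ ⟨F, hF, rfl⟩
    exact hI.image_map_mem_of_close hclose (fun F hF => hT ⟨F, hF, rfl⟩) hF

theorem stmt18_general {Y : Type u} {X : Type v} (CY : CoarseStructure Y) (CX : CoarseStructure X)
    (f f' : Y → X)
    (hclose : Close CY CX f f') :
    idealGen CX {E | ∃ F ∈ CY.ents, E = Prod.map f f '' F} =
      idealGen CX {E | ∃ F ∈ CY.ents, E = Prod.map f' f' '' F} :=
  (idealGen_image_map_subset_of_close hclose).antisymm
    (idealGen_image_map_subset_of_close hclose.symm)

/-- Close coarse maps generate the same ideal of push-forward entourages. -/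
theorem stmt18 {Y : Type u} {X : Type v} (CY : CoarseStructure Y) (CX : CoarseStructure X)
    (f f' : Y → X) (hf : IsCoarseMap CY CX f) (hf' : IsCoarseMap CY CX f')
    (hclose : Close CY CX f f') :
    idealGen CX {E | ∃ F ∈ CY.ents, E = Prod.map f f '' F} =
      idealGen CX {E | ∃ F ∈ CY.ents, E = Prod.map f' f' '' F} :=
  stmt18_general CY CX f f' hclose
end

section
/- Let f : Y → X be a coarse map between coarse spaces with X unital (the diagonal 1_X is an entourage of X), and suppose: (monic condition) 𝓔_Y = 𝓔_{Terminate(Y)} ∩ f*𝓔_X; and (epi condition) every point x ∈ X is connected to f(y) for some y ∈ Y (i.e., {(x, f(y))} ∈ 𝓔_X), and the ideal of 𝓔_X generated by {(f × f)(F) : F ∈ 𝓔_Y} equals 𝓔_X. Then there exists a coarse map e : X → Y such that f ∘ e is close to the identity of X and e ∘ f is close to the identity of Y; i.e., f is a coarse equivalence. -/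
open Set

universe u v w

/-- The coarse structure of `Terminate(Y)`. -/
def TerminateEnts {Y : Type u} (CY : CoarseStructure Y) : Set (Set (Y × Y)) :=
  {F | ProperAx F ∧ runit (leftSupp F) ∈ CY.ents ∧ runit (rightSupp F) ∈ CY.ents}

/-- The pull-back coarse structure along `f`. -/
def pullbackEnts {Y : Type u} {X : Type v} (f : Y → X) (CX : CoarseStructure X) :
    Set (Set (Y × Y)) :=
  {F | ProperAx F ∧ LocProperFor f F ∧ Prod.map f f '' F ∈ CX.ents}

/-! The entourages of `X` whose left and right supports lie within an entourage of `f(V)`,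
for some unital subspace `V ⊆ Y`, form an ideal containing every `(f × f)(F)`. By the epi
condition this ideal is all of `𝓔_X`; applied to the diagonal `1_X` it yields an entourage `E₀`
and `e : X → V` with `(x, f (e x)) ∈ E₀` for all `x`. This `e` is the coarse inverse: by the
monic condition a subset of `Y × Y` with unital supports is an entourage as soon as its image
under `f × f` is one and `f × f` is proper on it, and `E₀` controls these images. -/

def ProperOn {α β : Type*} (φ : α → β) (F : Set α) : Prop :=
  ∀ K : Set β, K.Finite → {p ∈ F | φ p ∈ K}.Finite

namespace ProperOn

variable {α β γ : Type*} {φ : α → β} {ψ : β → γ} {F : Set α}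

theorem comp (hψ : ProperOn ψ (φ '' F)) (hφ : ProperOn φ F) : ProperOn (ψ ∘ φ) F :=
  fun K hK => (hφ _ (hψ K hK)).subset fun p hp => ⟨hp.1, ⟨p, hp.1, rfl⟩, hp.2⟩

theorem of_comp (h : ProperOn (ψ ∘ φ) F) : ProperOn φ F :=
  fun _ hK => (h _ (hK.image ψ)).subset fun _ hp => ⟨hp.1, mem_image_of_mem ψ hp.2⟩

theorem image (h : ProperOn (ψ ∘ φ) F) : ProperOn ψ (φ '' F) := by
  intro K hK
  refine ((h K hK).image φ).subset ?_
  rintro _ ⟨⟨p, hp, rfl⟩, hpK⟩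
  exact ⟨p, ⟨hp, hpK⟩, rfl⟩

theorem comp_properMap (h : ProperOn φ F) (hψ : ProperMap ψ) : ProperOn (ψ ∘ φ) F :=
  fun K hK => h _ (hψ K hK)

end ProperOn

theorem ProperMap.of_comp {X Y : Type*} {g : X → Y} {e : Y → X} (h : ProperMap (g ∘ e)) :
    ProperMap e :=
  fun _ hK => (h _ (hK.image g)).subset fun _ hx => mem_image_of_mem g hx

section ProperAx

variable {X Y Z : Type*} {E : Set (X × X)}

theorem properAx_iff : ProperAx E ↔ ProperOn Prod.fst E ∧ ProperOn Prod.snd E :=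
  forall₂_and

theorem properMap_of_forall_mem {g : X → X} (hE : ProperAx E) (h : ∀ x, (x, g x) ∈ E) :
    ProperMap g := fun L hL =>
  (((properAx_iff.1 hE).2 L hL).image Prod.fst).subset fun x hx => ⟨(x, g x), ⟨h x, hx⟩, rfl⟩

theorem ProperAx.properOn_prodMap (hE : ProperAx E) {g : X → Y} (hg : ProperMap g)
    (h : X → Z) : ProperOn (Prod.map g h) E :=
  ProperOn.of_comp (ψ := Prod.fst)
    (show ProperOn (g ∘ Prod.fst) E from (properAx_iff.1 hE).1.comp_properMap hg)

theorem ProperAx.image_prodMap (hE : ProperAx E) {g : X → Y} (hg : ProperMap g) :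
    ProperAx (Prod.map g g '' E) :=
  properAx_iff.2
    ⟨ProperOn.image (show ProperOn (g ∘ Prod.fst) E from (properAx_iff.1 hE).1.comp_properMap hg),
      ProperOn.image (show ProperOn (g ∘ Prod.snd) E from (properAx_iff.1 hE).2.comp_properMap hg)⟩

theorem locProperFor_of_properMap (hE : ProperAx E) {g : X → Y} (hg : ProperMap g) :
    LocProperFor g E :=
  ⟨hE.image_prodMap hg, hE.properOn_prodMap hg g⟩

theorem LocProperFor.properAx {f : Y → X} {F : Set (Y × Y)} (h : LocProperFor f F) :
    ProperAx F :=
  properAx_iff.2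
    ⟨ProperOn.of_comp (ψ := f) (show ProperOn (f ∘ Prod.fst) F from
        (properAx_iff.1 h.1).1.comp h.2),
      ProperOn.of_comp (ψ := f) (show ProperOn (f ∘ Prod.snd) F from
        (properAx_iff.1 h.1).2.comp h.2)⟩

end ProperAx

section Supports

variable {X : Type*} {E E' : Set (X × X)}

theorem leftSupp_rcomp_subset : leftSupp (rcomp E E') ⊆ leftSupp E := by
  rintro _ ⟨p, ⟨m, hm, -⟩, rfl⟩
  exact ⟨_, hm, rfl⟩

theorem rightSupp_rcomp_subset : rightSupp (rcomp E E') ⊆ rightSupp E' := by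
  rintro _ ⟨p, ⟨m, -, hm⟩, rfl⟩
  exact ⟨_, hm, rfl⟩

theorem leftSupp_rcomp_subset_leftNbhd : leftSupp (rcomp E E') ⊆ leftNbhd E (leftSupp E') := by
  rintro _ ⟨p, ⟨m, hm, hm'⟩, rfl⟩
  exact ⟨m, ⟨_, hm', rfl⟩, hm⟩

theorem rightSupp_rcomp_subset_rightNbhd :
    rightSupp (rcomp E E') ⊆ rightNbhd (rightSupp E) E' := by
  rintro _ ⟨p, ⟨m, hm, hm'⟩, rfl⟩
  exact ⟨m, ⟨_, hm, rfl⟩, hm'⟩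

theorem leftSupp_rtrans : leftSupp (rtrans E) = rightSupp E := by
  ext x
  exact ⟨fun ⟨p, hp, hx⟩ => ⟨p.swap, hp, hx⟩, fun ⟨p, hp, hx⟩ => ⟨p.swap, hp, hx⟩⟩

theorem rightSupp_rtrans : rightSupp (rtrans E) = leftSupp E := by
  ext x
  exact ⟨fun ⟨p, hp, hx⟩ => ⟨p.swap, hp, hx⟩, fun ⟨p, hp, hx⟩ => ⟨p.swap, hp, hx⟩⟩

theorem leftSupp_image_prodMap {Y : Type*} (f : Y → X) (F : Set (Y × Y)) :
    leftSupp (Prod.map f f '' F) = f '' leftSupp F :=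
  image_comm fun _ => rfl

theorem rightSupp_image_prodMap {Y : Type*} (f : Y → X) (F : Set (Y × Y)) :
    rightSupp (Prod.map f f '' F) = f '' rightSupp F :=
  image_comm fun _ => rfl

theorem runit_union (S T : Set X) : runit (S ∪ T) = runit S ∪ runit T := by
  ext p
  simp only [runit, mem_ofPred_eq, mem_union, or_and_right]

theorem runit_singleton (x : X) : runit {x} = {(x, x)} := by
  ext ⟨a, b⟩
  simp only [runit, mem_ofPred_eq, mem_singleton_iff, Prod.mk.injEq]
  constructor
  · rintro ⟨rfl, rfl⟩
    exact ⟨rfl, rfl⟩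
  · rintro ⟨rfl, rfl⟩
    exact ⟨rfl, rfl⟩

theorem runit_mem_of_subset (C : CoarseStructure X) {S T : Set X} (hST : S ⊆ T)
    (hT : runit T ∈ C.ents) : runit S ∈ C.ents :=
  C.subset_mem _ hT _ fun _ hp => ⟨hST hp.1, hp.2⟩

end Supports

section NearUnitalImage

variable {Y X : Type*} (CY : CoarseStructure Y) (CX : CoarseStructure X) (f : Y → X)

def NearUnitalImage (S : Set X) : Prop :=
  ∃ E₀ ∈ CX.ents, ∃ V : Set Y, runit V ∈ CY.ents ∧ ∀ x ∈ S, ∃ y ∈ V, (x, f y) ∈ E₀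

def nearUnitalIdeal : Set (Set (X × X)) :=
  {E | E ∈ CX.ents ∧ NearUnitalImage CY CX f (leftSupp E) ∧ NearUnitalImage CY CX f (rightSupp E)}

variable {CY CX f} {S T : Set X} {E : Set (X × X)}

theorem NearUnitalImage.mono (hST : S ⊆ T) (h : NearUnitalImage CY CX f T) :
    NearUnitalImage CY CX f S :=
  let ⟨E₀, hE₀, V, hV, hT⟩ := h
  ⟨E₀, hE₀, V, hV, fun x hx => hT x (hST hx)⟩

theorem NearUnitalImage.union (hS : NearUnitalImage CY CX f S) (hT : NearUnitalImage CY CX f T) :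
    NearUnitalImage CY CX f (S ∪ T) := by
  obtain ⟨E₁, hE₁, V₁, hV₁, h₁⟩ := hS
  obtain ⟨E₂, hE₂, V₂, hV₂, h₂⟩ := hT
  refine ⟨E₁ ∪ E₂, CX.union_mem _ hE₁ _ hE₂, V₁ ∪ V₂,
    runit_union V₁ V₂ ▸ CY.union_mem _ hV₁ _ hV₂, ?_⟩
  rintro x (hx | hx)
  · obtain ⟨y, hy, hxy⟩ := h₁ x hx
    exact ⟨y, Or.inl hy, Or.inl hxy⟩
  · obtain ⟨y, hy, hxy⟩ := h₂ x hx
    exact ⟨y, Or.inr hy, Or.inr hxy⟩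

theorem NearUnitalImage.leftNbhd (h : NearUnitalImage CY CX f S) (hE : E ∈ CX.ents) :
    NearUnitalImage CY CX f (leftNbhd E S) := by
  obtain ⟨E₀, hE₀, V, hV, hS⟩ := h
  refine ⟨rcomp E E₀, CX.comp_mem _ hE _ hE₀, V, hV, ?_⟩
  rintro x ⟨x', hx', hxx'⟩
  obtain ⟨y, hy, hx'y⟩ := hS x' hx'
  exact ⟨y, hy, x', hxx', hx'y⟩

theorem NearUnitalImage.rightNbhd (h : NearUnitalImage CY CX f S) (hE : E ∈ CX.ents) :
    NearUnitalImage CY CX f (rightNbhd S E) := by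
  obtain ⟨E₀, hE₀, V, hV, hS⟩ := h
  refine ⟨rcomp (rtrans E) E₀, CX.comp_mem _ (CX.trans_mem _ hE) _ hE₀, V, hV, ?_⟩
  rintro x ⟨x', hx', hx'x⟩
  obtain ⟨y, hy, hx'y⟩ := hS x' hx'
  exact ⟨y, hy, x', hx'x, hx'y⟩

theorem nearUnitalImage_singleton {x : X} {y : Y} (h : ({(x, f y)} : Set (X × X)) ∈ CX.ents) :
    NearUnitalImage CY CX f {x} :=
  ⟨_, h, {y}, runit_singleton y ▸ CY.singleton_mem y, fun _ hx => ⟨y, rfl, hx ▸ rfl⟩⟩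

theorem nearUnitalImage_image (hX : runit univ ∈ CX.ents) {V : Set Y}
    (hV : runit V ∈ CY.ents) : NearUnitalImage CY CX f (f '' V) := by
  refine ⟨_, hX, V, hV, ?_⟩
  rintro _ ⟨y, hy, rfl⟩
  exact ⟨y, hy, trivial, rfl⟩

theorem isIdeal_nearUnitalIdeal (hpt : ∀ x : X, ∃ y : Y, ({(x, f y)} : Set (X × X)) ∈ CX.ents) :
    IsIdeal CX (nearUnitalIdeal CY CX f) := by
  have hmul : ∀ E ∈ nearUnitalIdeal CY CX f, ∀ E' ∈ CX.ents,
      rcomp E E' ∈ nearUnitalIdeal CY CX f ∧ rcomp E' E ∈ nearUnitalIdeal CY CX f := by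
    rintro E ⟨hE, hl, hr⟩ E' hE'
    exact ⟨⟨CX.comp_mem _ hE _ hE', hl.mono leftSupp_rcomp_subset,
        (hr.rightNbhd hE').mono rightSupp_rcomp_subset_rightNbhd⟩,
      ⟨CX.comp_mem _ hE' _ hE, (hl.leftNbhd hE').mono leftSupp_rcomp_subset_leftNbhd,
        hr.mono rightSupp_rcomp_subset⟩⟩
  refine ⟨fun E hE => hE.1, ⟨fun E hE => CX.proper E hE.1, ?_,
    fun E hE E' hE' => (hmul E hE E' hE'.1).1, ?_, ?_, ?_⟩, hmul⟩
  · rintro E ⟨hE, hl, hr⟩ E' ⟨hE', hl', hr'⟩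
    exact ⟨CX.union_mem _ hE _ hE', (hl.union hl').mono (image_union ..).subset,
      (hr.union hr').mono (image_union ..).subset⟩
  · rintro E ⟨hE, hl, hr⟩
    exact ⟨CX.trans_mem _ hE, leftSupp_rtrans ▸ hr, rightSupp_rtrans ▸ hl⟩
  · rintro E ⟨hE, hl, hr⟩ E' hE'E
    exact ⟨CX.subset_mem _ hE _ hE'E, hl.mono (image_mono hE'E), hr.mono (image_mono hE'E)⟩
  · intro x
    obtain ⟨y, hy⟩ := hpt x
    have hx : NearUnitalImage CY CX f {x} := nearUnitalImage_singleton hy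
    exact ⟨CX.singleton_mem x, hx.mono image_singleton.subset, hx.mono image_singleton.subset⟩

end NearUnitalImage

theorem idealGen_subset {X : Type*} {CX : CoarseStructure X} {S I : Set (Set (X × X))}
    (hI : IsIdeal CX I) (hSI : S ⊆ I) : idealGen CX S ⊆ I :=
  sInter_subset_of_mem ⟨hI, hSI⟩

section QuasiInverse

variable {Y X : Type*} {CY : CoarseStructure Y} {CX : CoarseStructure X} {f : Y → X}
  {e : X → Y} {E₀ : Set (X × X)} {V : Set Y}

theorem mem_ents_of_pullback (hmonic : TerminateEnts CY ∩ pullbackEnts f CX ⊆ CY.ents)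
    {H : Set (Y × Y)} (hl : runit (leftSupp H) ∈ CY.ents) (hr : runit (rightSupp H) ∈ CY.ents)
    (himg : Prod.map f f '' H ∈ CX.ents) (hres : ProperOn (Prod.map f f) H) : H ∈ CY.ents :=
  have hloc : LocProperFor f H := ⟨CX.proper _ himg, hres⟩
  hmonic ⟨⟨hloc.properAx, hl, hr⟩, hloc.properAx, hloc, himg⟩

theorem close_comp_id_of_forall_mem (hE₀ : E₀ ∈ CX.ents) (heE₀ : ∀ x, (x, f (e x)) ∈ E₀) :
    Close CX CX (f ∘ e) id := by
  intro E hE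
  refine CX.subset_mem _ (CX.comp_mem _ (CX.trans_mem _ hE₀) _ hE) _ ?_
  rintro _ ⟨p, hp, rfl⟩
  exact ⟨p.1, heE₀ p.1, hp⟩

theorem isCoarseMap_of_forall_mem (hmonic : TerminateEnts CY ∩ pullbackEnts f CX ⊆ CY.ents)
    (hE₀ : E₀ ∈ CX.ents) (hV : runit V ∈ CY.ents) (heV : ∀ x, e x ∈ V)
    (heE₀ : ∀ x, (x, f (e x)) ∈ E₀) : IsCoarseMap CX CY e := by
  have hfe : ProperMap (f ∘ e) := properMap_of_forall_mem (CX.proper _ hE₀) heE₀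
  intro E hE
  have hEp := CX.proper E hE
  refine ⟨locProperFor_of_properMap hEp hfe.of_comp, mem_ents_of_pullback hmonic ?_ ?_ ?_ ?_⟩
  · refine runit_mem_of_subset CY ?_ hV
    rintro _ ⟨_, ⟨p, -, rfl⟩, rfl⟩
    exact heV p.1
  · refine runit_mem_of_subset CY ?_ hV
    rintro _ ⟨_, ⟨p, -, rfl⟩, rfl⟩
    exact heV p.2
  · refine CX.subset_mem _ (CX.comp_mem _ (CX.trans_mem _ hE₀) _ (CX.comp_mem _ hE _ hE₀)) _ ?_
    rintro _ ⟨_, ⟨p, hp, rfl⟩, rfl⟩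
    exact ⟨p.1, heE₀ p.1, p.2, hp, heE₀ p.2⟩
  · exact ProperOn.image (show ProperOn (Prod.map f f ∘ Prod.map e e) E from
      (locProperFor_of_properMap hEp hfe).2)

theorem close_id_comp_of_forall_mem (hmonic : CY.ents = TerminateEnts CY ∩ pullbackEnts f CX)
    (hE₀ : E₀ ∈ CX.ents) (hV : runit V ∈ CY.ents) (heV : ∀ x, e x ∈ V)
    (heE₀ : ∀ x, (x, f (e x)) ∈ E₀) : Close CY CY (e ∘ f) id := by
  have hfe : ProperMap (f ∘ e) := properMap_of_forall_mem (CX.proper _ hE₀) heE₀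
  intro F hF
  obtain ⟨⟨-, -, hr⟩, -, hloc, himg⟩ := hmonic.subset hF
  refine mem_ents_of_pullback hmonic.superset ?_ ?_ ?_ ?_
  · refine runit_mem_of_subset CY ?_ hV
    rintro _ ⟨_, ⟨p, -, rfl⟩, rfl⟩
    exact heV (f p.1)
  · refine runit_mem_of_subset CY ?_ hr
    rintro _ ⟨_, ⟨p, hp, rfl⟩, rfl⟩
    exact ⟨p, hp, rfl⟩
  · refine CX.subset_mem _ (CX.comp_mem _ (CX.trans_mem _ hE₀) _ himg) _ ?_
    rintro _ ⟨_, ⟨p, hp, rfl⟩, rfl⟩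
    exact ⟨f p.1, heE₀ (f p.1), p, hp, rfl⟩
  · exact ProperOn.image (show ProperOn (Prod.map (f ∘ e) id ∘ Prod.map f f) F from
      ((CX.proper _ himg).properOn_prodMap hfe id).comp hloc.2)

end QuasiInverse

theorem stmt19_general {Y : Type u} {X : Type v} (CY : CoarseStructure Y) (CX : CoarseStructure X)
    (f : Y → X)
    (hXuni : runit (Set.univ : Set X) ∈ CX.ents)
    (hmonic : CY.ents = TerminateEnts CY ∩ pullbackEnts f CX)
    (hepi1 : ∀ x : X, ∃ y : Y, ({(x, f y)} : Set (X × X)) ∈ CX.ents)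
    (hepi2 : idealGen CX {E | ∃ F ∈ CY.ents, E = Prod.map f f '' F} = CX.ents) :
    ∃ e : X → Y, IsCoarseMap CX CY e ∧
      Close CX CX (f ∘ e) id ∧ Close CY CY (e ∘ f) id := by
  have himages : {E | ∃ F ∈ CY.ents, E = Prod.map f f '' F} ⊆ nearUnitalIdeal CY CX f := by
    rintro _ ⟨F, hF, rfl⟩
    obtain ⟨⟨-, hl, hr⟩, -, -, himg⟩ := hmonic.subset hF
    exact ⟨himg, leftSupp_image_prodMap f F ▸ nearUnitalImage_image hXuni hl,
      rightSupp_image_prodMap f F ▸ nearUnitalImage_image hXuni hr⟩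
  have hents : CX.ents ⊆ nearUnitalIdeal CY CX f :=
    hepi2 ▸ idealGen_subset (isIdeal_nearUnitalIdeal hepi1) himages
  obtain ⟨-, ⟨E₀, hE₀, V, hV, hcover⟩, -⟩ := hents hXuni
  choose e heV heE₀ using fun x => hcover x ⟨(x, x), ⟨trivial, rfl⟩, rfl⟩
  exact ⟨e, isCoarseMap_of_forall_mem hmonic.superset hE₀ hV heV heE₀,
    close_comp_id_of_forall_mem hE₀ heE₀, close_id_comp_of_forall_mem hmonic hE₀ hV heV heE₀⟩

/-- A coarse map to a unital coarse space which is both monic and epi in the coarse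
category is a coarse equivalence. -/
theorem stmt19 {Y : Type u} {X : Type v} (CY : CoarseStructure Y) (CX : CoarseStructure X)
    (f : Y → X) (hf : IsCoarseMap CY CX f)
    (hXuni : runit (Set.univ : Set X) ∈ CX.ents)
    (hmonic : CY.ents = TerminateEnts CY ∩ pullbackEnts f CX)
    (hepi1 : ∀ x : X, ∃ y : Y, ({(x, f y)} : Set (X × X)) ∈ CX.ents)
    (hepi2 : idealGen CX {E | ∃ F ∈ CY.ents, E = Prod.map f f '' F} = CX.ents) :
    ∃ e : X → Y, IsCoarseMap CX CY e ∧
      Close CX CX (f ∘ e) id ∧ Close CY CY (e ∘ f) id :=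
  stmt19_general CY CX f hXuni hmonic hepi1 hepi2
end
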